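/- arXiv:0904.3147 — 5 statements merged into one kernel-verified Lean document; each statement's English description precedes it below -/
import Mathlib

section
/- Let β ∈ ℝ and let u : ℝ → ℝ be four times continuously differentiable with u''''(x) + β² u''(x) + e^{u(x)} − 1 = 0 for all x ∈ ℝ, and suppose u(x), u′(x), u″(x), u‴(x) all tend to 0 as x → −∞. Then for every x ∈ ℝ: u′(x) u‴(x) − (u″(x))²/2 + (β²/2)(u′(x))² + e^{u(x)} − u(x) − 1 = 0. -/
open Real Filter

/-!
Multiplying the equation by `u'` turns it into `E' = 0` for the energy
`E = u'u''' - (u'')²/2 + (β²/2)(u')² + eᵘ - u - 1`, so `E` is constant; the decay of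
`u, u', u'', u'''` at `-∞` forces that constant to be `0`.
-/

theorem eq_of_forall_hasDerivAt_zero_of_tendsto {𝕜 G : Type*} [RCLike 𝕜]
    [NormedAddCommGroup G] [NormedSpace 𝕜 G] {f : 𝕜 → G} {l : Filter 𝕜} [l.NeBot] {c : G}
    (hf : ∀ x, HasDerivAt f 0 x) (hlim : Tendsto f l (nhds c)) (x : 𝕜) : f x = c := by
  have hconst : f = fun _ ↦ f x :=
    funext fun y ↦ is_const_of_deriv_eq_zero (fun z ↦ (hf z).differentiableAt)
      (fun z ↦ (hf z).deriv) y x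
  rw [hconst] at hlim
  exact tendsto_nhds_unique tendsto_const_nhds hlim

theorem ContDiff.hasDerivAt_iteratedDeriv {𝕜 F : Type*} [NontriviallyNormedField 𝕜]
    [NormedAddCommGroup F] [NormedSpace 𝕜 F] {f : 𝕜 → F} {n k : ℕ} (hf : ContDiff 𝕜 n f)
    (hk : k < n) (x : 𝕜) : HasDerivAt (iteratedDeriv k f) (iteratedDeriv (k + 1) f x) x := by
  rw [iteratedDeriv_succ]
  exact (hf.differentiable_iteratedDeriv k (mod_cast hk) x).hasDerivAt

namespace SuspensionBridge

noncomputable def energy (β : ℝ) (u : ℝ → ℝ) (x : ℝ) : ℝ :=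
  deriv u x * iteratedDeriv 3 u x - (iteratedDeriv 2 u x) ^ 2 / 2
    + (β ^ 2 / 2) * (deriv u x) ^ 2 + Real.exp (u x) - u x - 1

variable {β : ℝ} {u : ℝ → ℝ}

theorem hasDerivAt_energy (hu : ContDiff ℝ 4 u) (x : ℝ) :
    HasDerivAt (energy β u) (deriv u x *
      (iteratedDeriv 4 u x + β ^ 2 * iteratedDeriv 2 u x + Real.exp (u x) - 1)) x := by
  have d0 : HasDerivAt u (deriv u x) x := (hu.differentiable (by norm_num) x).hasDerivAt
  have d1 : HasDerivAt (deriv u) (iteratedDeriv 2 u x) x := by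
    simpa only [iteratedDeriv_one] using hu.hasDerivAt_iteratedDeriv (k := 1) (by norm_num) x
  have d2 := hu.hasDerivAt_iteratedDeriv (k := 2) (by norm_num) x
  have d3 := hu.hasDerivAt_iteratedDeriv (k := 3) (by norm_num) x
  have H := ((((d1.mul d3).sub ((d2.pow 2).div_const 2)).add ((d1.pow 2).const_mul (β ^ 2 / 2))).add
    d0.exp).sub d0 |>.sub_const 1
  exact H.congr_deriv (by ring)

theorem tendsto_energy {l : Filter ℝ} (h0 : Tendsto u l (nhds 0))
    (h1 : Tendsto (deriv u) l (nhds 0)) (h2 : Tendsto (iteratedDeriv 2 u) l (nhds 0))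
    (h3 : Tendsto (iteratedDeriv 3 u) l (nhds 0)) : Tendsto (energy β u) l (nhds 0) := by
  have H := ((((h1.mul h3).sub ((h2.pow 2).div_const 2)).add
    ((h1.pow 2).const_mul (β ^ 2 / 2))).add (continuous_exp.tendsto 0 |>.comp h0)).sub h0
    |>.sub_const 1
  rwa [exp_zero, show (0 : ℝ) * 0 - 0 ^ 2 / 2 + β ^ 2 / 2 * 0 ^ 2 + 1 - 0 - 1 = 0 by ring] at H

end SuspensionBridge

open SuspensionBridge in
/-- Pohozaev-type pointwise identity for the suspension-bridge equation:
if `u'''' + β²u'' + e^u - 1 = 0` on `ℝ` and `u, u', u'', u''' → 0` as `x → -∞`, then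
`u'u''' - (u'')²/2 + (β²/2)(u')² + e^u - u - 1 = 0` everywhere. -/
theorem stmt4 (β : ℝ) (u : ℝ → ℝ) (hu : ContDiff ℝ 4 u)
    (heq : ∀ x : ℝ, iteratedDeriv 4 u x + β ^ 2 * iteratedDeriv 2 u x
        + Real.exp (u x) - 1 = 0)
    (h0 : Tendsto u atBot (nhds 0))
    (h1 : Tendsto (deriv u) atBot (nhds 0))
    (h2 : Tendsto (iteratedDeriv 2 u) atBot (nhds 0))
    (h3 : Tendsto (iteratedDeriv 3 u) atBot (nhds 0)) :
    ∀ x : ℝ, deriv u x * iteratedDeriv 3 u x - (iteratedDeriv 2 u x) ^ 2 / 2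
      + (β ^ 2 / 2) * (deriv u x) ^ 2 + Real.exp (u x) - u x - 1 = 0 := by
  have hE' (x : ℝ) : HasDerivAt (energy β u) 0 x := by
    simpa only [heq x, mul_zero] using hasDerivAt_energy (β := β) hu x
  exact eq_of_forall_hasDerivAt_zero_of_tendsto hE' (tendsto_energy h0 h1 h2 h3)
end

section
/- Let k > 1 and a > 0. If u : [−a, a] → ℝ is four times continuously differentiable and satisfies u''''(x) + 2u''(x) + k² u(x) = 0 for all x ∈ [−a, a], together with the Navier boundary conditions u(−a) = u(a) = 0 and u''(−a) = u''(a) = 0, then u is identically zero on [−a, a]. -/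
/-!
Multiply the equation by `u` and integrate by parts twice; the Navier conditions kill every
boundary term, leaving `∫ u''² + 2 ∫ u'' u + k² ∫ u² = 0`, that is
`∫ ((u'' + u)² + (k² - 1) u²) = 0`. For `k > 1` the integrand is continuous and nonnegative,
hence identically zero, and so is `u`.
-/

open MeasureTheory Real Filter Set intervalIntegral

theorem ContinuousOn.eqOn_zero_of_integral_eq_zero {f : ℝ → ℝ} {a b : ℝ} (hab : a < b)
    (hf : ContinuousOn f (Icc a b)) (hf₀ : ∀ x ∈ Icc a b, 0 ≤ f x)
    (hint : ∫ x in a..b, f x = 0) : EqOn f 0 (Icc a b) := by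
  intro c hc
  by_contra hne
  have hpos : (∫ _ in a..b, (0 : ℝ)) < ∫ x in a..b, f x :=
    integral_lt_integral_of_continuousOn_of_le_of_exists_lt hab continuousOn_const hf
      (fun x hx => hf₀ x (Ioc_subset_Icc_self hx))
      ⟨c, hc, lt_of_le_of_ne (hf₀ c hc) (Ne.symm hne)⟩
  simp [hint] at hpos

section IteratedDerivWithinIcc

variable {a b : ℝ} {u : ℝ → ℝ} {n : ℕ}

theorem ContDiffOn.hasDerivWithinAt_iteratedDerivWithin_Icc (hab : a < b)
    (hu : ContDiffOn ℝ n u (Icc a b)) {m : ℕ} (hm : m < n) {x : ℝ} (hx : x ∈ Icc a b) :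
    HasDerivWithinAt (iteratedDerivWithin m u (Icc a b))
      (iteratedDerivWithin (m + 1) u (Icc a b) x) (Icc a b) x := by
  rw [iteratedDerivWithin_succ]
  exact ((hu.differentiableOn_iteratedDerivWithin (by exact_mod_cast hm)
    (uniqueDiffOn_Icc hab)) x hx).hasDerivWithinAt

theorem ContDiffOn.intervalIntegrable_iteratedDerivWithin_Icc (hab : a < b)
    (hu : ContDiffOn ℝ n u (Icc a b)) {m : ℕ} (hm : m ≤ n) :
    IntervalIntegrable (iteratedDerivWithin m u (Icc a b)) volume a b :=
  (hu.continuousOn_iteratedDerivWithin (by exact_mod_cast hm)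
    (uniqueDiffOn_Icc hab)).intervalIntegrable_of_Icc hab.le

theorem ContDiffOn.integral_iteratedDerivWithin_mul_succ (hab : a < b)
    (hu : ContDiffOn ℝ n u (Icc a b)) {p q : ℕ} (hp : p < n) (hq : q < n) :
    ∫ x in a..b, iteratedDerivWithin p u (Icc a b) x * iteratedDerivWithin (q + 1) u (Icc a b) x
      = iteratedDerivWithin p u (Icc a b) b * iteratedDerivWithin q u (Icc a b) b
        - iteratedDerivWithin p u (Icc a b) a * iteratedDerivWithin q u (Icc a b) a
        - ∫ x in a..b,
            iteratedDerivWithin (p + 1) u (Icc a b) x * iteratedDerivWithin q u (Icc a b) x := by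
  have hderiv {m : ℕ} (hm : m < n) : ∀ x ∈ uIcc a b, HasDerivWithinAt
      (iteratedDerivWithin m u (Icc a b)) (iteratedDerivWithin (m + 1) u (Icc a b) x)
      (uIcc a b) x := by
    rw [uIcc_of_le hab.le]
    exact fun x hx => hu.hasDerivWithinAt_iteratedDerivWithin_Icc hab hm hx
  exact integral_mul_deriv_eq_deriv_mul_of_hasDerivWithinAt (hderiv hp) (hderiv hq)
    (hu.intervalIntegrable_iteratedDerivWithin_Icc hab hp)
    (hu.intervalIntegrable_iteratedDerivWithin_Icc hab hq)

end IteratedDerivWithinIcc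

theorem ContDiffOn.integral_mul_iteratedDerivWithin_four_of_navier {a b : ℝ} {u : ℝ → ℝ}
    (hab : a < b) (hu : ContDiffOn ℝ 4 u (Icc a b)) (hua : u a = 0) (hub : u b = 0)
    (hu''a : iteratedDerivWithin 2 u (Icc a b) a = 0)
    (hu''b : iteratedDerivWithin 2 u (Icc a b) b = 0) :
    ∫ x in a..b, u x * iteratedDerivWithin 4 u (Icc a b) x
      = ∫ x in a..b, iteratedDerivWithin 2 u (Icc a b) x ^ 2 := by
  have h₀₃ := hu.integral_iteratedDerivWithin_mul_succ hab (p := 0) (q := 3) (by norm_num)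
    (by norm_num)
  have h₁₂ := hu.integral_iteratedDerivWithin_mul_succ hab (p := 1) (q := 2) (by norm_num)
    (by norm_num)
  simp only [iteratedDerivWithin_zero, hua, hub, hu''a, hu''b] at h₀₃ h₁₂
  simp only [h₀₃, h₁₂, sq]
  ring

/-- For `k > 1`, the Navier boundary value problem `u'''' + 2u'' + k²u = 0` on `[-a, a]`
with `u(±a) = u''(±a) = 0` has only the trivial solution. -/
theorem stmt7 (k a : ℝ) (hk : 1 < k) (ha : 0 < a) (u : ℝ → ℝ)
    (hu : ContDiffOn ℝ 4 u (Set.Icc (-a) a))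
    (heq : ∀ x ∈ Set.Icc (-a) a,
      iteratedDerivWithin 4 u (Set.Icc (-a) a) x
        + 2 * iteratedDerivWithin 2 u (Set.Icc (-a) a) x + k ^ 2 * u x = 0)
    (hbc1 : u (-a) = 0) (hbc2 : u a = 0)
    (hbc3 : iteratedDerivWithin 2 u (Set.Icc (-a) a) (-a) = 0)
    (hbc4 : iteratedDerivWithin 2 u (Set.Icc (-a) a) a = 0) :
    ∀ x ∈ Set.Icc (-a) a, u x = 0 := by
  have hlt : -a < a := by linarith
  set u'' := iteratedDerivWithin 2 u (Icc (-a) a)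
  set u'''' := iteratedDerivWithin 4 u (Icc (-a) a)
  have huc : ContinuousOn u (Icc (-a) a) := hu.continuousOn
  have hu''c : ContinuousOn u'' (Icc (-a) a) :=
    hu.continuousOn_iteratedDerivWithin (by norm_num) (uniqueDiffOn_Icc hlt)
  have hu''''c : ContinuousOn u'''' (Icc (-a) a) :=
    hu.continuousOn_iteratedDerivWithin le_rfl (uniqueDiffOn_Icc hlt)
  set energy := fun x => (u'' x + u x) ^ 2 + (k ^ 2 - 1) * u x ^ 2
  have henergy : ∀ x ∈ Icc (-a) a, energy x = u'' x ^ 2 - u x * u'''' x := fun x hx => by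
    linear_combination u x * heq x hx
  have hint : ∫ x in (-a)..a, energy x = 0 := by
    rw [integral_congr (fun x hx => henergy x (uIcc_of_le hlt.le ▸ hx)),
      intervalIntegral.integral_sub
        (ContinuousOn.intervalIntegrable_of_Icc hlt.le (by fun_prop))
        (ContinuousOn.intervalIntegrable_of_Icc hlt.le (by fun_prop)),
      hu.integral_mul_iteratedDerivWithin_four_of_navier hlt hbc1 hbc2 hbc3 hbc4, sub_self]
  have hk' : 0 < k ^ 2 - 1 := by nlinarith
  have hzero := ContinuousOn.eqOn_zero_of_integral_eq_zero hlt (by fun_prop)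
    (fun x _ => by positivity) hint
  intro x hx
  have hsq : (k ^ 2 - 1) * u x ^ 2 = 0 := by
    have := hzero hx
    simp only [energy, Pi.zero_apply] at this
    nlinarith [sq_nonneg (u'' x + u x), mul_nonneg hk'.le (sq_nonneg (u x))]
  simpa [hk'.ne'] using hsq
end

section
/- For every a > 0 and every twice continuously differentiable function v : [−a, a] → ℝ with v(−a) = v(a) = 0, one has ∫_{−a}^{a} (v″(x))² dx ≥ (15/(4a⁵)) (∫_{−a}^{a} v(x) dx)². -/
open Filter MeasureTheory Set Topology

/-! The weight `w x = (x - a) (x - b) / 2` satisfies `w'' = 1` and vanishes at both endpoints, so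
two integrations by parts give `∫ v = ∫ v'' w` whenever `v(a) = v(b) = 0`. Cauchy–Schwarz then
yields `(∫ v)² ≤ ∫ (v'')² · ∫ w² = ∫ (v'')² · (b - a)⁵ / 120`, with equality for `v = w`
(the solution of `v'''' = 1` with `v = v'' = 0` at the endpoints). On `[-a, a]` the constant is
`(2a)⁵ / 120 = 4a⁵ / 15`. -/

theorem sq_intervalIntegral_mul_le {f g : ℝ → ℝ} {a b : ℝ} (hab : a ≤ b)
    (hf : IntervalIntegrable (fun x => f x ^ 2) volume a b)
    (hg : IntervalIntegrable (fun x => g x ^ 2) volume a b)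
    (hfg : IntervalIntegrable (fun x => f x * g x) volume a b) :
    (∫ x in a..b, f x * g x) ^ 2 ≤ (∫ x in a..b, f x ^ 2) * ∫ x in a..b, g x ^ 2 := by
  have hquad : ∀ t : ℝ, 0 ≤ (∫ x in a..b, g x ^ 2) * (t * t)
      + (-2 * ∫ x in a..b, f x * g x) * t + ∫ x in a..b, f x ^ 2 := by
    intro t
    have hexpand : ∀ x, (f x - t * g x) ^ 2 = f x ^ 2 - 2 * t * (f x * g x) + t ^ 2 * g x ^ 2 := by
      intro x; ring
    have hnonneg :=
      intervalIntegral.integral_nonneg (μ := volume) hab fun x _ => sq_nonneg (f x - t * g x)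
    simp_rw [hexpand] at hnonneg
    rw [intervalIntegral.integral_add (hf.sub (hfg.const_mul _)) (hg.const_mul _),
      intervalIntegral.integral_sub hf (hfg.const_mul _), intervalIntegral.integral_const_mul,
      intervalIntegral.integral_const_mul] at hnonneg
    linarith
  have hdiscrim := discrim_le_zero hquad
  rw [discrim] at hdiscrim
  linarith

theorem integral_sq_mul_sub_mul_sub_div_two (a b : ℝ) :
    ∫ x in a..b, ((x - a) * (x - b) / 2) ^ 2 = (b - a) ^ 5 / 120 := by
  have hexpand : ∀ x : ℝ, ((x - a) * (x - b) / 2) ^ 2 =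
      (x - a) ^ 4 / 4 - (b - a) / 2 * (x - a) ^ 3 + (b - a) ^ 2 / 4 * (x - a) ^ 2 := by
    intro x; ring
  simp_rw [hexpand]
  rw [intervalIntegral.integral_add, intervalIntegral.integral_sub, intervalIntegral.integral_div,
    intervalIntegral.integral_const_mul, intervalIntegral.integral_const_mul]
  · rw [intervalIntegral.integral_comp_sub_right (fun x => x ^ 4),
      intervalIntegral.integral_comp_sub_right (fun x => x ^ 3),
      intervalIntegral.integral_comp_sub_right (fun x => x ^ 2)]
    simp only [sub_self, integral_pow]
    ring
  all_goals exact Continuous.intervalIntegrable (by fun_prop) _ _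

section SecondDerivative

variable {v v' v'' : ℝ → ℝ} {a b : ℝ}

theorem integral_mul_sub_mul_sub_div_two_eq_integral (hab : a ≤ b)
    (hv : ContinuousOn v (Icc a b)) (hv' : ContinuousOn v' (Icc a b))
    (hv'' : ContinuousOn v'' (Icc a b))
    (hdv : ∀ x ∈ Ioo a b, HasDerivAt v (v' x) x) (hdv' : ∀ x ∈ Ioo a b, HasDerivAt v' (v'' x) x)
    (ha : v a = 0) (hb : v b = 0) :
    ∫ x in a..b, v'' x * ((x - a) * (x - b) / 2) = ∫ x in a..b, v x := by
  set w : ℝ → ℝ := fun x => (x - a) * (x - b) / 2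
  have hw : ∀ x, HasDerivAt w (x - (a + b) / 2) x := fun x =>
    (((hasDerivAt_id' x).sub_const a).mul ((hasDerivAt_id' x).sub_const b)).div_const 2
      |>.congr_deriv (by ring)
  have hw_cont : Continuous w := by fun_prop
  have hint_v'' : IntervalIntegrable (fun x => v'' x * w x) volume a b :=
    (hv''.mul hw_cont.continuousOn).intervalIntegrable_of_Icc hab
  have hint_v : IntervalIntegrable v volume a b := hv.intervalIntegrable_of_Icc hab
  -- `v' w - v w'` is an antiderivative of `v'' w - v w'' = v'' w - v`, and vanishes at `a` and `b`.
  have hftc : ∫ x in a..b, (v'' x * w x - v x) =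
      (v' b * w b - v b * (b - (a + b) / 2)) - (v' a * w a - v a * (a - (a + b) / 2)) := by
    refine intervalIntegral.integral_eq_sub_of_hasDerivAt_of_le hab
      ((hv'.mul hw_cont.continuousOn).sub (hv.mul (continuous_sub_right _).continuousOn))
      (fun x hx => ?_) (hint_v''.sub hint_v)
    convert ((hdv' x hx).mul (hw x)).sub ((hdv x hx).mul ((hasDerivAt_id' x).sub_const _))
      using 1
    ring
  rw [intervalIntegral.integral_sub hint_v'' hint_v] at hftc
  simp only [w, ha, hb, sub_self, mul_zero, zero_mul, zero_div] at hftc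
  linarith

theorem sq_integral_le_of_hasDerivAt (hab : a ≤ b)
    (hv : ContinuousOn v (Icc a b)) (hv' : ContinuousOn v' (Icc a b))
    (hv'' : ContinuousOn v'' (Icc a b))
    (hdv : ∀ x ∈ Ioo a b, HasDerivAt v (v' x) x) (hdv' : ∀ x ∈ Ioo a b, HasDerivAt v' (v'' x) x)
    (ha : v a = 0) (hb : v b = 0) :
    (∫ x in a..b, v x) ^ 2 ≤ (b - a) ^ 5 / 120 * ∫ x in a..b, v'' x ^ 2 := by
  rw [← integral_mul_sub_mul_sub_div_two_eq_integral hab hv hv' hv'' hdv hdv' ha hb,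
    ← integral_sq_mul_sub_mul_sub_div_two, mul_comm]
  have hw : ContinuousOn (fun x : ℝ => (x - a) * (x - b) / 2) (Icc a b) := by fun_prop
  exact sq_intervalIntegral_mul_le hab ((hv''.pow 2).intervalIntegrable_of_Icc hab)
    ((hw.pow 2).intervalIntegrable_of_Icc hab) ((hv''.mul hw).intervalIntegrable_of_Icc hab)

end SecondDerivative

theorem sq_integral_le_of_contDiffOn {v : ℝ → ℝ} {a b : ℝ} (hab : a < b)
    (hv : ContDiffOn ℝ 2 v (Icc a b)) (ha : v a = 0) (hb : v b = 0) :
    (∫ x in a..b, v x) ^ 2 ≤ (b - a) ^ 5 / 120 * ∫ x in a..b, deriv (deriv v) x ^ 2 := by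
  have hs : UniqueDiffOn ℝ (Icc a b) := uniqueDiffOn_Icc hab
  set v' := derivWithin v (Icc a b)
  have hv' : ContDiffOn ℝ 1 v' (Icc a b) := hv.derivWithin hs (by norm_num)
  have hderiv : ∀ {f : ℝ → ℝ}, ContDiffOn ℝ 1 f (Icc a b) →
      ∀ x ∈ Ioo a b, HasDerivAt f (derivWithin f (Icc a b) x) x := fun hf x hx =>
    ((hf.differentiableOn one_ne_zero x (Ioo_subset_Icc_self hx)).hasDerivWithinAt).hasDerivAt
      (Icc_mem_nhds hx.1 hx.2)
  have hdv := hderiv (hv.of_le (by norm_num))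
  have hdv' := hderiv hv'
  -- `deriv (deriv v)` is junk at the endpoints, where `v` is only controlled from one side.
  have hsecond : EqOn (fun x => deriv (deriv v) x ^ 2)
      (fun x => derivWithin v' (Icc a b) x ^ 2) (Ioo a b) := fun x hx => by
    have hloc : deriv v =ᶠ[𝓝 x] v' :=
      eventually_of_mem (isOpen_Ioo.mem_nhds hx) fun y hy => (hdv y hy).deriv
    simp only [hloc.deriv_eq, (hdv' x hx).deriv]
  rw [intervalIntegral.integral_congr_Ioo_of_le hab.le hsecond]
  exact sq_integral_le_of_hasDerivAt hab.le hv.continuousOn hv'.continuousOn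
    (hv'.continuousOn_derivWithin hs le_rfl) hdv hdv' ha hb

/-- For every `a > 0` and every `v ∈ C²[-a, a]` with `v(±a) = 0`,
`∫_{-a}^{a}(v'')² ≥ (15/(4a⁵)) (∫_{-a}^{a} v)²`. -/
theorem stmt9 (a : ℝ) (ha : 0 < a) (v : ℝ → ℝ)
    (hv : ContDiffOn ℝ 2 v (Set.Icc (-a) a))
    (h1 : v (-a) = 0) (h2 : v a = 0) :
    (∫ x in (-a)..a, (deriv (deriv v) x) ^ 2)
      ≥ (15 / (4 * a ^ 5)) * (∫ x in (-a)..a, v x) ^ 2 := by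
  have hbound := sq_integral_le_of_contDiffOn (by linarith) hv h1 h2
  have hlen : (a - -a) ^ 5 / 120 = 4 * a ^ 5 / 15 := by ring
  rw [hlen] at hbound
  have hpos : 0 < 4 * a ^ 5 := by positivity
  calc 15 / (4 * a ^ 5) * (∫ x in (-a)..a, v x) ^ 2
      ≤ 15 / (4 * a ^ 5) * (4 * a ^ 5 / 15 * ∫ x in (-a)..a, deriv (deriv v) x ^ 2) := by
        gcongr
    _ = ∫ x in (-a)..a, deriv (deriv v) x ^ 2 := by field_simp
end

section
/- For every a > 0 and every twice continuously differentiable function v : [−a, a] → ℝ with v(−a) = v(a) = 0, one has ∫_{−a}^{a} (v″(x))² dx ≥ (π²/(4a²)) ∫_{−a}^{a} (v′(x))² dx. -/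
/-!
With `c = π / (2a)`, the proof combines three facts about `v` vanishing at `±a`:
the Wirtinger inequality `c² ∫ v² ≤ ∫ v'²`, the integration by parts `∫ v v'' = -∫ v'²`, and
`0 ≤ ∫ (v'' + c² v)² = ∫ v''² - 2c² ∫ v'² + c⁴ ∫ v²`, whose right side is at most
`∫ v''² - c² ∫ v'²` by Wirtinger.

Wirtinger's inequality is first proved for `k < c`, where `tan (k x)` is smooth on `[-a, a]`:
pointwise `v'² - k² v² = (v' + k v tan (k x))² - (k v² tan (k x))'`, and the last term integrates
to `0` because `v(±a) = 0`. Letting `k → c` gives the sharp constant.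
-/

open MeasureTheory Real Filter Set Topology

theorem ContDiffOn.hasDerivAt_derivWithin_Icc {f : ℝ → ℝ} {a b x : ℝ} {n : WithTop ℕ∞}
    (hf : ContDiffOn ℝ n f (Icc a b)) (hn : n ≠ 0) (hx : x ∈ Ioo a b) :
    HasDerivAt f (derivWithin f (Icc a b) x) x :=
  ((hf.differentiableOn hn x (Ioo_subset_Icc_self hx)).hasDerivWithinAt).hasDerivAt
    (Icc_mem_nhds hx.1 hx.2)

section SymmetricInterval

variable {a : ℝ} {f f' f'' : ℝ → ℝ}

theorem sq_mul_integral_sq_le_integral_deriv_sq {k : ℝ} (ha : 0 ≤ a) (hk : 0 ≤ k)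
    (hka : k * a < π / 2) (hf : ContinuousOn f (Icc (-a) a))
    (hf' : ContinuousOn f' (Icc (-a) a)) (hderiv : ∀ x ∈ Ioo (-a) a, HasDerivAt f (f' x) x)
    (hfl : f (-a) = 0) (hfr : f a = 0) :
    k ^ 2 * ∫ x in (-a)..a, f x ^ 2 ≤ ∫ x in (-a)..a, f' x ^ 2 := by
  have hcos : ∀ x ∈ Icc (-a) a, 0 < cos (k * x) := fun x hx ↦
    cos_pos_of_mem_Ioo ⟨by nlinarith [hx.1], by nlinarith [hx.2]⟩
  have htan : ∀ x ∈ Icc (-a) a,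
      HasDerivAt (fun y ↦ tan (k * y)) (k * (1 + tan (k * x) ^ 2)) x := by
    intro x hx
    have hcos_ne := (hcos x hx).ne'
    refine ((hasDerivAt_tan hcos_ne).comp x
      ((hasDerivAt_id x).const_mul k)).congr_deriv ?_
    rw [tan_eq_sin_div_cos]
    field_simp
    nlinarith [sin_sq_add_cos_sq (k * x)]
  have hint : ∀ g : ℝ → ℝ, ContinuousOn g (Icc (-a) a) → IntervalIntegrable g volume (-a) a :=
    fun g hg ↦ hg.intervalIntegrable_of_Icc (by linarith)
  have hT : ContinuousOn (fun y ↦ tan (k * y)) (Icc (-a) a) := fun x hx ↦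
    (htan x hx).continuousAt.continuousWithinAt
  have hftc : ∫ x in (-a)..a, (f' x + k * f x * tan (k * x)) ^ 2 - (f' x ^ 2 - k ^ 2 * f x ^ 2)
      = 0 := by
    rw [intervalIntegral.integral_eq_sub_of_hasDerivAt_of_le
      (f := fun x ↦ k * f x ^ 2 * tan (k * x)) (by linarith)
      ((continuousOn_const.mul (hf.pow 2)).mul hT), hfl, hfr]
    · ring
    · intro x hx
      refine (((hderiv x hx).pow 2 |>.const_mul k).mul
        (htan x (Ioo_subset_Icc_self hx))).congr_deriv ?_
      simp only [Pi.pow_apply]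
      ring
    · exact hint _ (by fun_prop)
  have hsq : 0 ≤ ∫ x in (-a)..a, (f' x + k * f x * tan (k * x)) ^ 2 :=
    intervalIntegral.integral_nonneg (by linarith) fun x _ ↦ sq_nonneg _
  rw [intervalIntegral.integral_sub (hint _ (by fun_prop)) (hint _ (by fun_prop)),
    intervalIntegral.integral_sub (hint _ (by fun_prop)) (hint _ (by fun_prop)),
    intervalIntegral.integral_const_mul] at hftc
  linarith

theorem sq_pi_div_mul_integral_sq_le_integral_deriv_sq (ha : 0 < a)
    (hf : ContinuousOn f (Icc (-a) a)) (hf' : ContinuousOn f' (Icc (-a) a))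
    (hderiv : ∀ x ∈ Ioo (-a) a, HasDerivAt f (f' x) x) (hfl : f (-a) = 0) (hfr : f a = 0) :
    (π / (2 * a)) ^ 2 * ∫ x in (-a)..a, f x ^ 2 ≤ ∫ x in (-a)..a, f' x ^ 2 := by
  have hlim : Tendsto (fun k : ℝ ↦ k ^ 2 * ∫ x in (-a)..a, f x ^ 2) (𝓝[<] (π / (2 * a)))
      (𝓝 ((π / (2 * a)) ^ 2 * ∫ x in (-a)..a, f x ^ 2)) :=
    ((continuous_pow 2).mul continuous_const).continuousAt.tendsto.mono_left nhdsWithin_le_nhds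
  refine le_of_tendsto hlim ?_
  filter_upwards [Ioo_mem_nhdsLT (show 0 < π / (2 * a) by positivity)] with k hk
  refine sq_mul_integral_sq_le_integral_deriv_sq ha.le hk.1.le ?_ hf hf' hderiv hfl hfr
  calc k * a < π / (2 * a) * a := by gcongr; exact hk.2
    _ = π / 2 := by field_simp

theorem sq_pi_div_mul_integral_deriv_sq_le_integral_deriv2_sq (ha : 0 < a)
    (hf : ContinuousOn f (Icc (-a) a)) (hf' : ContinuousOn f' (Icc (-a) a))
    (hf'' : ContinuousOn f'' (Icc (-a) a)) (hderiv : ∀ x ∈ Ioo (-a) a, HasDerivAt f (f' x) x)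
    (hderiv' : ∀ x ∈ Ioo (-a) a, HasDerivAt f' (f'' x) x) (hfl : f (-a) = 0) (hfr : f a = 0) :
    (π / (2 * a)) ^ 2 * ∫ x in (-a)..a, f' x ^ 2 ≤ ∫ x in (-a)..a, f'' x ^ 2 := by
  set c := π / (2 * a)
  have hIcc : uIcc (-a) a = Icc (-a) a := uIcc_of_le (by linarith)
  have hint : ∀ g : ℝ → ℝ, ContinuousOn g (Icc (-a) a) → IntervalIntegrable g volume (-a) a :=
    fun g hg ↦ hg.intervalIntegrable_of_Icc (by linarith)
  have hwirtinger : c ^ 2 * ∫ x in (-a)..a, f x ^ 2 ≤ ∫ x in (-a)..a, f' x ^ 2 :=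
    sq_pi_div_mul_integral_sq_le_integral_deriv_sq ha hf hf' hderiv hfl hfr
  have hparts : ∫ x in (-a)..a, f x * f'' x = -∫ x in (-a)..a, f' x ^ 2 := by
    rw [intervalIntegral.integral_mul_deriv_eq_deriv_mul_of_hasDerivAt (hIcc ▸ hf) (hIcc ▸ hf')
      (by simpa [ha.le] using hderiv) (by simpa [ha.le] using hderiv') (hint _ hf') (hint _ hf''),
      hfl, hfr]
    simp only [sq, zero_mul, sub_zero, zero_sub]
  have hsq : 0 ≤ ∫ x in (-a)..a, (f'' x + c ^ 2 * f x) ^ 2 :=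
    intervalIntegral.integral_nonneg (by linarith) fun x _ ↦ sq_nonneg _
  have hexpand : ∫ x in (-a)..a, (f'' x + c ^ 2 * f x) ^ 2 = (∫ x in (-a)..a, f'' x ^ 2)
      + 2 * c ^ 2 * (∫ x in (-a)..a, f x * f'' x) + c ^ 4 * ∫ x in (-a)..a, f x ^ 2 := by
    rw [← intervalIntegral.integral_const_mul, ← intervalIntegral.integral_const_mul,
      ← intervalIntegral.integral_add (hint _ (by fun_prop)) (hint _ (by fun_prop)),
      ← intervalIntegral.integral_add (hint _ (by fun_prop)) (hint _ (by fun_prop))]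
    exact intervalIntegral.integral_congr fun x _ ↦ by ring
  rw [hexpand, hparts] at hsq
  linarith [mul_le_mul_of_nonneg_left hwirtinger (sq_nonneg c)]

end SymmetricInterval

/-- For every `a > 0` and every `v ∈ C²[-a, a]` with `v(±a) = 0`,
`∫_{-a}^{a}(v'')² ≥ (π²/(4a²)) ∫_{-a}^{a}(v')²`. -/
theorem stmt10 (a : ℝ) (ha : 0 < a) (v : ℝ → ℝ)
    (hv : ContDiffOn ℝ 2 v (Set.Icc (-a) a))
    (h1 : v (-a) = 0) (h2 : v a = 0) :
    (∫ x in (-a)..a, (deriv (deriv v) x) ^ 2)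
      ≥ (Real.pi ^ 2 / (4 * a ^ 2)) * (∫ x in (-a)..a, (deriv v x) ^ 2) := by
  set s := Icc (-a) a
  have hs : UniqueDiffOn ℝ s := uniqueDiffOn_Icc (by linarith)
  have hv' : ContDiffOn ℝ 1 (derivWithin v s) s := hv.derivWithin hs (by norm_num)
  have hderiv : ∀ x ∈ Ioo (-a) a, HasDerivAt v (derivWithin v s x) x :=
    fun x hx ↦ hv.hasDerivAt_derivWithin_Icc (by norm_num) hx
  have hderiv' : ∀ x ∈ Ioo (-a) a,
      HasDerivAt (derivWithin v s) (derivWithin (derivWithin v s) s x) x :=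
    fun x hx ↦ hv'.hasDerivAt_derivWithin_Icc (by norm_num) hx
  have heq : EqOn (deriv v) (derivWithin v s) (Ioo (-a) a) := fun x hx ↦ (hderiv x hx).deriv
  have heq' : EqOn (deriv (deriv v)) (derivWithin (derivWithin v s) s) (Ioo (-a) a) :=
    fun x hx ↦ by
      rw [EventuallyEq.deriv_eq (eventually_of_mem (isOpen_Ioo.mem_nhds hx) heq)]
      exact (hderiv' x hx).deriv
  have hI1 : ∫ x in (-a)..a, deriv v x ^ 2 = ∫ x in (-a)..a, derivWithin v s x ^ 2 :=
    intervalIntegral.integral_congr_Ioo_of_le (by linarith) fun x hx ↦ by rw [heq hx]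
  have hI2 : ∫ x in (-a)..a, deriv (deriv v) x ^ 2
      = ∫ x in (-a)..a, derivWithin (derivWithin v s) s x ^ 2 :=
    intervalIntegral.integral_congr_Ioo_of_le (by linarith) fun x hx ↦ by rw [heq' hx]
  rw [ge_iff_le, show π ^ 2 / (4 * a ^ 2) = (π / (2 * a)) ^ 2 by ring, hI1, hI2]
  exact sq_pi_div_mul_integral_deriv_sq_le_integral_deriv2_sq ha hv.continuousOn
    hv'.continuousOn (hv'.continuousOn_derivWithin hs le_rfl) hderiv hderiv' h1 h2
end

section
/- Let β ∈ ℝ and let u : ℝ → ℝ be four times continuously differentiable with u''''(x) + β² u''(x) + u(x)³ + 3u(x)² + 2u(x) = 0 for all x ∈ ℝ, and suppose u(x), u′(x), u″(x), u‴(x) all tend to 0 as x → −∞. Then for every x ∈ ℝ: u′(x) u‴(x) − (u″(x))²/2 + (β²/2)(u′(x))² + (1/4) u(x)² (u(x) + 2)² = 0. -/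
/-!
Multiplying `u'''' + β²u'' + f(u) = 0` by `u'` gives the derivative of
`E = u'u''' - (u'')²/2 + (β²/2)(u')² + F(u)` with `F' = f`, so `E` is constant. Its limit at `-∞`
is `F 0`, and for `f(u) = u³ + 3u² + 2u` the primitive `F(u) = u²(u + 2)²/4` vanishes at `0`.
-/

open Filter Topology

theorem hasDerivAt_iteratedDeriv {n : WithTop ℕ∞} {u : ℝ → ℝ} (hu : ContDiff ℝ n u) (k : ℕ)
    (hk : k < n) (x : ℝ) :
    HasDerivAt (iteratedDeriv k u) (iteratedDeriv (k + 1) u x) x := by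
  rw [iteratedDeriv_succ]
  exact (hu.differentiable_iteratedDeriv k hk x).hasDerivAt

theorem eq_of_hasDerivAt_zero_of_tendsto_atBot {E : Type*} [NormedAddCommGroup E]
    [NormedSpace ℝ E] {g : ℝ → E} {c : E} (hg : ∀ x, HasDerivAt g 0 x)
    (hlim : Tendsto g atBot (𝓝 c)) (x : ℝ) : g x = c := by
  have hconst : ∀ y, g y = g x :=
    fun y ↦ is_const_of_deriv_eq_zero (fun z ↦ (hg z).differentiableAt) (fun z ↦ (hg z).deriv) y x
  exact tendsto_nhds_unique (tendsto_const_nhds.congr fun y ↦ (hconst y).symm) hlim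

/-- The first integral of `u'''' + β²u'' + F'(u) = 0`. -/
noncomputable def swiftHohenbergEnergy (β : ℝ) (F u : ℝ → ℝ) (x : ℝ) : ℝ :=
  deriv u x * iteratedDeriv 3 u x - iteratedDeriv 2 u x ^ 2 / 2
    + β ^ 2 / 2 * deriv u x ^ 2 + F (u x)

section Energy

variable {β : ℝ} {F f u : ℝ → ℝ}

theorem hasDerivAt_swiftHohenbergEnergy (hu : ContDiff ℝ 4 u)
    (hF : ∀ y, HasDerivAt F (f y) y) (x : ℝ) :
    HasDerivAt (swiftHohenbergEnergy β F u)
      (deriv u x * (iteratedDeriv 4 u x + β ^ 2 * iteratedDeriv 2 u x + f (u x))) x := by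
  have h1 : HasDerivAt u (deriv u x) x := by
    simpa only [zero_add, iteratedDeriv_zero, iteratedDeriv_one] using
      hasDerivAt_iteratedDeriv hu 0 (by norm_num) x
  have h2 : HasDerivAt (deriv u) (iteratedDeriv 2 u x) x := by
    simpa only [iteratedDeriv_one] using hasDerivAt_iteratedDeriv hu 1 (by norm_num) x
  have h3 := hasDerivAt_iteratedDeriv hu 2 (by norm_num) x
  have h4 := hasDerivAt_iteratedDeriv hu 3 (by norm_num) x
  refine ((((h2.fun_mul h4).fun_sub ((h3.fun_pow 2).div_const 2)).fun_add
    ((h2.fun_pow 2).const_mul (β ^ 2 / 2))).fun_add ((hF (u x)).comp x h1)).congr_deriv ?_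
  push_cast
  ring

theorem swiftHohenbergEnergy_eq (hu : ContDiff ℝ 4 u) (hF : ∀ y, HasDerivAt F (f y) y)
    (heq : ∀ x, iteratedDeriv 4 u x + β ^ 2 * iteratedDeriv 2 u x + f (u x) = 0)
    (h0 : Tendsto u atBot (𝓝 0)) (h1 : Tendsto (deriv u) atBot (𝓝 0))
    (h2 : Tendsto (iteratedDeriv 2 u) atBot (𝓝 0))
    (h3 : Tendsto (iteratedDeriv 3 u) atBot (𝓝 0)) (x : ℝ) :
    swiftHohenbergEnergy β F u x = F 0 := by
  have hderiv : ∀ x, HasDerivAt (swiftHohenbergEnergy β F u) 0 x := fun x ↦ by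
    simpa only [heq, mul_zero] using hasDerivAt_swiftHohenbergEnergy (β := β) hu hF x
  have hF0 : Tendsto (F ∘ u) atBot (𝓝 (F 0)) :=
    ((hF 0).continuousAt.tendsto).comp h0
  have hlim : Tendsto (swiftHohenbergEnergy β F u) atBot
      (𝓝 (0 * 0 - 0 ^ 2 / 2 + β ^ 2 / 2 * 0 ^ 2 + F 0)) := (((h1.mul h3).sub ((h2.pow 2).div_const 2)).add
    ((h1.pow 2).const_mul (β ^ 2 / 2))).add hF0
  exact eq_of_hasDerivAt_zero_of_tendsto_atBot hderiv (by simpa using hlim) x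

end Energy

theorem hasDerivAt_quarter_sq_mul_add_two_sq (y : ℝ) :
    HasDerivAt (fun y : ℝ ↦ 1 / 4 * y ^ 2 * (y + 2) ^ 2) (y ^ 3 + 3 * y ^ 2 + 2 * y) y := by
  refine ((((hasDerivAt_id' y).fun_pow 2).const_mul (1 / 4 : ℝ)).fun_mul
    (((hasDerivAt_id' y).add_const 2).fun_pow 2)).congr_deriv ?_
  push_cast
  ring

/-- Pohozaev-type pointwise identity for the (shifted) Swift–Hohenberg equation:
if `u'''' + β²u'' + u³ + 3u² + 2u = 0` on `ℝ` and `u, u', u'', u''' → 0` as `x → -∞`,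
then `u'u''' - (u'')²/2 + (β²/2)(u')² + (1/4)u²(u+2)² = 0` everywhere. -/
theorem stmt18 (β : ℝ) (u : ℝ → ℝ) (hu : ContDiff ℝ 4 u)
    (heq : ∀ x : ℝ, iteratedDeriv 4 u x + β ^ 2 * iteratedDeriv 2 u x
        + (u x) ^ 3 + 3 * (u x) ^ 2 + 2 * u x = 0)
    (h0 : Tendsto u atBot (nhds 0))
    (h1 : Tendsto (deriv u) atBot (nhds 0))
    (h2 : Tendsto (iteratedDeriv 2 u) atBot (nhds 0))
    (h3 : Tendsto (iteratedDeriv 3 u) atBot (nhds 0)) :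
    ∀ x : ℝ, deriv u x * iteratedDeriv 3 u x - (iteratedDeriv 2 u x) ^ 2 / 2
      + (β ^ 2 / 2) * (deriv u x) ^ 2 + (1 / 4) * (u x) ^ 2 * (u x + 2) ^ 2 = 0 := by
  intro x
  have heq' : ∀ x, iteratedDeriv 4 u x + β ^ 2 * iteratedDeriv 2 u x
      + ((u x) ^ 3 + 3 * (u x) ^ 2 + 2 * u x) = 0 := fun x ↦ by linarith [heq x]
  have := swiftHohenbergEnergy_eq hu hasDerivAt_quarter_sq_mul_add_two_sq heq' h0 h1 h2 h3 x
  simpa [swiftHohenbergEnergy, mul_assoc] using this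
end
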